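/- arXiv:math/0508068 — 2 statements merged into one kernel-verified Lean document; each statement's English description precedes it below -/
import Mathlib

section
/- Let W be a Coxeter group, J, J' ⊆ I, and y ∈ {}^{J'}W^{δ(J)} with y δ(J) = J' (i.e. y δ(j) y⁻¹ gives a length-preserving bijection from the simple reflections in δ(J) to those in J'). Then for every w ∈ W^{δ(J)} and u ∈ W_{δ(J)}, one has ℓ(w u y⁻¹) = ℓ(w y⁻¹) + ℓ(u). -/
open CoxeterSystem
set_option autoImplicit false

variable {B W : Type*} [Group W] {M : CoxeterMatrix B} (cs : CoxeterSystem M W)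

/-- The standard parabolic subgroup `W_J` generated by the simple reflections in `J`. -/
def CoxeterSystem.parabolic (J : Set B) : Subgroup W := Subgroup.closure (cs.simple '' J)

/-- The set `W^J` of minimal length representatives of the cosets `W/W_J`. -/
def CoxeterSystem.minRight (J : Set B) : Set W :=
  {w | ∀ j ∈ J, cs.length w < cs.length (w * cs.simple j)}

/-- The set `^J W` of minimal length representatives of the cosets `W_J\W`. -/
def CoxeterSystem.minLeft (J : Set B) : Set W :=
  {w | ∀ j ∈ J, cs.length w < cs.length (cs.simple j * w)}

/-- The Bruhat order: `v ≤ w` iff some reduced word for `w` has a sublist whose product is `v`. -/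
def CoxeterSystem.bruhatLE (v w : W) : Prop :=
  ∃ ω : List B, cs.IsReduced ω ∧ cs.wordProd ω = w ∧
    ∃ ω' : List B, ω'.Sublist ω ∧ cs.wordProd ω' = v

/-- The support of `w`: the indices of simple reflections occurring in a reduced word for `w`. -/
def CoxeterSystem.supp (w : W) : Set B :=
  {i | ∃ ω : List B, cs.IsReduced ω ∧ cs.wordProd ω = w ∧ i ∈ ω}

/-!
Fix `k ∈ δ(J)` and let `s_{j'} = y s_k y⁻¹`. Then `w u s_k y⁻¹ = (w u y⁻¹) s_{j'}`, so it suffices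
to see that right multiplication by `s_{j'}` raises the length of `w u y⁻¹` exactly when right
multiplication by `s_k` raises the length of `u`; induction along a word for `u` then keeps
`ℓ(w u y⁻¹) - ℓ(u)` constant. The first step uses the reflection cocycle
`N(ab) = N(b) Δ b⁻¹ N(a) b` of right inversion sets: `s_{j'} ∉ N(y⁻¹)` because
`ℓ(y s_k) = ℓ(y) + 1`, so `s_{j'} ∈ N(w u y⁻¹)` iff `s_k ∈ N(w u)`. The second uses
`ℓ(w v) = ℓ(w) + ℓ(v)` for `w ∈ W^K`, `v ∈ W_K`, which the cocycle gives for the shortest element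
of `w W_K`; a `K`-descent of the remaining factor shows that this element is `w` itself.
The cocycle is built from Tits' permutation representation of `W` on `W × ℤ/2`.
-/

namespace CoxeterSystem

open scoped Classical

theorem alternatingWord_two_mul_add_two (i i' : B) (m : ℕ) :
    alternatingWord i i' (2 * m + 2) = i :: i' :: alternatingWord i i' (2 * m) := by
  rw [alternatingWord_succ', alternatingWord_succ']
  simp

theorem reverse_alternatingWord_two_mul (i i' : B) (m : ℕ) :
    (alternatingWord i i' (2 * m)).reverse = alternatingWord i' i (2 * m) := by
  induction m with
  | zero => rfl
  | succ m ih =>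
    rw [show 2 * (m + 1) = 2 * m + 2 by ring, alternatingWord_two_mul_add_two,
      alternatingWord_succ, alternatingWord_succ]
    simp [ih]

theorem prod_map_alternatingWord_two_mul {G : Type*} [Monoid G] (f : B → G) (i i' : B) (m : ℕ) :
    ((alternatingWord i i' (2 * m)).map f).prod = (f i * f i') ^ m := by
  induction m with
  | zero => simp [alternatingWord]
  | succ m ih =>
    rw [show 2 * (m + 1) = 2 * m + 2 by ring, alternatingWord_two_mul_add_two]
    simp [ih, pow_succ', mul_assoc]

theorem _root_.List.even_count_of_getElem_add {α : Type*} [BEq α] (L : List α) (m : ℕ)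
    (hL : L.length = 2 * m) (hper : ∀ k (hk : k < m), L[m + k] = L[k]) (a : α) :
    Even (L.count a) := by
  have hdrop : L.drop m = L.take m := by
    apply List.ext_getElem (by simp; omega)
    intro k h₁ h₂
    simp only [List.getElem_drop, List.getElem_take]
    exact hper k (by simp at h₂; omega)
  rw [← List.take_append_drop m L, List.count_append, hdrop]
  exact ⟨_, rfl⟩

theorem even_count_rightInvSeq_braid (i i' : B) (t : W) :
    Even ((cs.rightInvSeq (alternatingWord i i' (2 * M i i'))).count t) := by
  -- The `k`-th left inversion of the reversed word is `s_{i'} (s_i s_{i'})^k`, which has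
  -- period `M i i'` in `k`.
  rw [← reverse_alternatingWord_two_mul i' i, rightInvSeq_reverse, List.count_reverse]
  refine List.even_count_of_getElem_add _ (M i i') (by simp) (fun k hk => ?_) t
  rw [getElem_leftInvSeq_alternatingWord _ _ _ _ _ (by omega),
    getElem_leftInvSeq_alternatingWord _ _ _ _ _ (by omega),
    prod_alternatingWord_eq_mul_pow, prod_alternatingWord_eq_mul_pow]
  simp [Nat.mul_add_div, pow_add, cs.simple_mul_simple_pow]

theorem simple_mul_mul_simple_eq_simple_iff (i : B) (t : W) :
    cs.simple i * t * cs.simple i = cs.simple i ↔ t = cs.simple i := by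
  constructor
  · intro h
    simpa [mul_assoc] using congrArg (cs.simple i * · * cs.simple i) h
  · rintro rfl
    simp

noncomputable def titsInvolution (i : B) : Equiv.Perm (W × ZMod 2) :=
  Function.Involutive.toPerm
    (fun p => (cs.simple i * p.1 * cs.simple i, p.2 + if p.1 = cs.simple i then 1 else 0))
    (by
      rintro ⟨t, ε⟩
      simp only [simple_mul_mul_simple_eq_simple_iff, Prod.mk.injEq]
      refine ⟨by simp [mul_assoc], ?_⟩
      split_ifs <;> simp [add_assoc, ZModModule.add_self])

theorem titsInvolution_apply (i : B) (p : W × ZMod 2) :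
    cs.titsInvolution i p =
      (cs.simple i * p.1 * cs.simple i, p.2 + if p.1 = cs.simple i then 1 else 0) :=
  rfl

theorem prod_map_titsInvolution_apply (ω : List B) (t : W) (ε : ZMod 2) :
    (ω.map cs.titsInvolution).prod (t, ε) =
      (cs.wordProd ω * t * (cs.wordProd ω)⁻¹, ε + (cs.rightInvSeq ω).count t) := by
  induction ω with
  | nil => simp
  | cons i ω ih =>
    have hconj : cs.wordProd ω * t * (cs.wordProd ω)⁻¹ = cs.simple i ↔
        (cs.wordProd ω)⁻¹ * cs.simple i * cs.wordProd ω = t := by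
      constructor <;> intro h <;> rw [← h] <;> group
    simp only [List.map_cons, List.prod_cons, Equiv.Perm.mul_apply, ih, titsInvolution_apply,
      rightInvSeq, List.count_cons, beq_iff_eq]
    refine Prod.ext ?_ ?_
    · simp only [wordProd_cons, mul_inv_rev, inv_simple]
      group
    · simp only [hconj]
      split_ifs <;> push_cast <;> ring

theorem isLiftable_titsInvolution : M.IsLiftable cs.titsInvolution := by
  intro i i'
  refine Equiv.ext fun ⟨t, ε⟩ => ?_
  obtain ⟨c, hc⟩ := cs.even_count_rightInvSeq_braid i i' t
  rw [← prod_map_alternatingWord_two_mul, prod_map_titsInvolution_apply,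
    prod_alternatingWord_eq_mul_pow, hc]
  simp [cs.simple_mul_simple_pow, ZModModule.add_self]

noncomputable def titsRep : W →* Equiv.Perm (W × ZMod 2) :=
  cs.lift ⟨cs.titsInvolution, cs.isLiftable_titsInvolution⟩

/-- The reflection cocycle `η(w; t)` of Björner–Brenti, *Combinatorics of Coxeter groups*, §1.4. -/
noncomputable def inversionParity (w t : W) : ZMod 2 := (cs.titsRep w (t, 0)).2

theorem titsRep_wordProd (ω : List B) :
    cs.titsRep (cs.wordProd ω) = (ω.map cs.titsInvolution).prod := by
  rw [wordProd, map_list_prod, List.map_map]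
  congr 2
  funext i
  exact cs.lift_apply_simple cs.isLiftable_titsInvolution i

theorem inversionParity_wordProd (ω : List B) (t : W) :
    cs.inversionParity (cs.wordProd ω) t = (cs.rightInvSeq ω).count t := by
  simp [inversionParity, titsRep_wordProd, prod_map_titsInvolution_apply]

theorem titsRep_apply (w t : W) (ε : ZMod 2) :
    cs.titsRep w (t, ε) = (w * t * w⁻¹, ε + cs.inversionParity w t) := by
  obtain ⟨ω, rfl⟩ := cs.wordProd_surjective w
  rw [inversionParity_wordProd, titsRep_wordProd, prod_map_titsInvolution_apply]

theorem inversionParity_mul (a b t : W) :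
    cs.inversionParity (a * b) t = cs.inversionParity b t + cs.inversionParity a (b * t * b⁻¹) := by
  have h := congrArg Prod.snd (Equiv.Perm.mul_apply (cs.titsRep a) (cs.titsRep b) (t, 0))
  rwa [← map_mul, titsRep_apply, titsRep_apply, titsRep_apply, zero_add, zero_add] at h

theorem inversionParity_one (t : W) : cs.inversionParity 1 t = 0 := by
  simpa using cs.inversionParity_wordProd [] t

theorem inversionParity_simple_simple (i : B) :
    cs.inversionParity (cs.simple i) (cs.simple i) = 1 := by
  simpa using cs.inversionParity_wordProd [i] (cs.simple i)

theorem inversionParity_self {t : W} (ht : cs.IsReflection t) : cs.inversionParity t t = 1 := by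
  obtain ⟨a, i, rfl⟩ := ht
  -- Expand `η((a s) a⁻¹; t)`; the terms from `a⁻¹` and `a` cancel since `η(a a⁻¹; t) = 0`.
  have e₁ : a⁻¹ * (a * cs.simple i * a⁻¹) * a⁻¹⁻¹ = cs.simple i := by group
  have e₂ : cs.simple i * cs.simple i * (cs.simple i)⁻¹ = cs.simple i := by group
  have hcancel := cs.inversionParity_mul a a⁻¹ (a * cs.simple i * a⁻¹)
  rw [mul_inv_cancel, inversionParity_one, e₁] at hcancel
  rw [inversionParity_mul, inversionParity_mul, e₁, e₂, inversionParity_simple_simple]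
  linear_combination -hcancel

theorem mem_rightInvSeq_of_inversionParity_eq_one {ω : List B} {t : W}
    (h : cs.inversionParity (cs.wordProd ω) t = 1) : t ∈ cs.rightInvSeq ω := by
  rw [inversionParity_wordProd] at h
  refine List.count_pos_iff.mp (Nat.pos_of_ne_zero fun h0 => ?_)
  rw [h0] at h
  exact absurd h (by decide)

theorem inversionParity_eq_one_iff (w t : W) :
    cs.inversionParity w t = 1 ↔ cs.IsRightInversion w t := by
  have mp : ∀ w, cs.inversionParity w t = 1 → cs.IsRightInversion w t := by
    intro w h
    obtain ⟨ω, hω, rfl⟩ := cs.exists_isReduced w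
    exact cs.isRightInversion_of_mem_rightInvSeq hω (cs.mem_rightInvSeq_of_inversionParity_eq_one h)
  refine ⟨mp w, fun ⟨ht, hlt⟩ => ?_⟩
  have hwtt : w * t * t = w := by rw [mul_assoc, ht.mul_self, mul_one]
  have hsplit := cs.inversionParity_mul (w * t) t t
  rw [hwtt, show t * t * t⁻¹ = t by group, cs.inversionParity_self ht] at hsplit
  have hwt : cs.inversionParity (w * t) t ≠ 1 := fun h => by
    have := (mp _ h).2
    rw [hwtt] at this
    omega
  rw [hsplit]
  revert hwt
  generalize cs.inversionParity (w * t) t = x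
  decide +revert

theorem isRightInversion_mul_iff (a b t : W) :
    cs.IsRightInversion (a * b) t ↔
      (cs.IsRightInversion b t ↔ ¬ cs.IsRightInversion a (b * t * b⁻¹)) := by
  simp only [← inversionParity_eq_one_iff, inversionParity_mul]
  generalize cs.inversionParity b t = x
  generalize cs.inversionParity a (b * t * b⁻¹) = y
  decide +revert

theorem exists_eraseIdx_of_isRightInversion {ω : List B} {t : W}
    (h : cs.IsRightInversion (cs.wordProd ω) t) :
    ∃ j < ω.length, cs.wordProd ω * t = cs.wordProd (ω.eraseIdx j) := by
  rw [← inversionParity_eq_one_iff] at h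
  obtain ⟨j, hj, rfl⟩ := List.mem_iff_getElem.mp (cs.mem_rightInvSeq_of_inversionParity_eq_one h)
  refine ⟨j, by simpa using hj, ?_⟩
  rw [← List.getD_eq_getElem _ 1 hj, wordProd_mul_getD_rightInvSeq]

theorem simple_mem_parabolic {K : Set B} {k : B} (hk : k ∈ K) :
    cs.simple k ∈ cs.parabolic K :=
  Subgroup.subset_closure ⟨k, hk, rfl⟩

@[elab_as_elim]
theorem parabolic_induction_right {K : Set B} {p : (v : W) → v ∈ cs.parabolic K → Prop}
    (one : p 1 (one_mem _))
    (mul_simple : ∀ v hv, ∀ k (hk : k ∈ K), p v hv →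
      p (v * cs.simple k) (mul_mem hv (cs.simple_mem_parabolic hk)))
    {v : W} (hv : v ∈ cs.parabolic K) : p v hv := by
  induction hv using Subgroup.closure_induction_right with
  | one => exact one
  | mul_right v hv _ hk ih =>
    obtain ⟨k, hk, rfl⟩ := hk
    exact mul_simple v hv k hk ih
  | mul_inv_cancel v hv _ hk ih =>
    obtain ⟨k, hk, rfl⟩ := hk
    simpa using mul_simple v hv k hk ih

theorem exists_isReduced_of_mem_parabolic {K : Set B} {v : W} (hv : v ∈ cs.parabolic K) :
    ∃ ω : List B, (∀ i ∈ ω, i ∈ K) ∧ cs.IsReduced ω ∧ cs.wordProd ω = v := by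
  induction hv using cs.parabolic_induction_right with
  | one => exact ⟨[], by simp, by simp [IsReduced], rfl⟩
  | mul_simple v hv k hk ih =>
    obtain ⟨ω, hωK, hω, rfl⟩ := ih
    rcases cs.length_mul_simple (cs.wordProd ω) k with hlen | hlen
    · refine ⟨ω ++ [k], ?_, ?_, by simp [wordProd_append]⟩
      · simpa [or_imp, forall_and] using ⟨hωK, hk⟩
      · simp only [IsReduced, wordProd_append, wordProd_singleton, hlen, List.length_append]
        simp [← hω.eq]
    · obtain ⟨j, hj, he⟩ := cs.exists_eraseIdx_of_isRightInversion (ω := ω)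
        ⟨cs.isReflection_simple k, by omega⟩
      refine ⟨ω.eraseIdx j, fun i hi => hωK i ((List.eraseIdx_sublist _ _).subset hi), ?_, he.symm⟩
      have := hω.eq
      rw [IsReduced, ← he, List.length_eraseIdx_of_lt hj]
      omega

theorem exists_isRightDescent_of_mem_parabolic {K : Set B} {v : W} (hv : v ∈ cs.parabolic K)
    (hne : v ≠ 1) : ∃ k ∈ K, cs.IsRightDescent v k := by
  obtain ⟨ω, hωK, hω, rfl⟩ := cs.exists_isReduced_of_mem_parabolic hv
  obtain ⟨ω', k, rfl⟩ : ∃ ω' k, ω = ω' ++ [k] := by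
    rcases List.eq_nil_or_concat ω with rfl | ⟨ω', k, rfl⟩
    · exact absurd cs.wordProd_nil hne
    · exact ⟨ω', k, by simp⟩
  refine ⟨k, hωK k (by simp), ?_⟩
  have hlen := hω.eq
  have := cs.length_wordProd_le ω'
  simp only [wordProd_append, wordProd_singleton, List.length_append, List.length_singleton]
    at hlen ⊢
  rw [IsRightDescent, simple_mul_simple_cancel_right]
  omega

theorem length_mul_simple_add_eq_of_iff {a b : W} {i j : B}
    (h : cs.IsRightDescent a i ↔ cs.IsRightDescent b j) :
    cs.length (a * cs.simple i) + cs.length b = cs.length (b * cs.simple j) + cs.length a := by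
  unfold IsRightDescent at h
  rcases cs.length_mul_simple a i with ha | ha <;> rcases cs.length_mul_simple b j with hb | hb <;>
    omega

theorem length_mul_of_forall_length_le {K : Set B} {w v : W}
    (hmin : ∀ x ∈ cs.parabolic K, cs.length w ≤ cs.length (w * x)) (hv : v ∈ cs.parabolic K) :
    cs.length (w * v) = cs.length w + cs.length v := by
  induction hv using cs.parabolic_induction_right with
  | one => simp
  | mul_simple v hv k hk ih =>
    have hw : ¬ cs.IsRightInversion w (v * cs.simple k * v⁻¹) := fun h =>
      (hmin _ (mul_mem (mul_mem hv (cs.simple_mem_parabolic hk)) (inv_mem hv))).not_gt h.2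
    have hdesc : cs.IsRightDescent (w * v) k ↔ cs.IsRightDescent v k := by
      rw [← isRightInversion_simple_iff_isRightDescent,
        ← isRightInversion_simple_iff_isRightDescent, isRightInversion_mul_iff]
      tauto
    have := cs.length_mul_simple_add_eq_of_iff hdesc
    rw [← mul_assoc]
    omega

theorem forall_length_le_mul_of_mem_minRight {K : Set B} {w : W} (hw : w ∈ cs.minRight K) :
    ∀ x ∈ cs.parabolic K, cs.length w ≤ cs.length (w * x) := by
  obtain ⟨x₀, hx₀, hmin⟩ := (InvImage.wf (fun x => cs.length (w * x)) wellFounded_lt).has_min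
    (cs.parabolic K : Set W) ⟨1, one_mem _⟩
  simp only [InvImage, not_lt, SetLike.mem_coe] at hmin
  have hadd : ∀ z ∈ cs.parabolic K, cs.length (w * x₀ * z) = cs.length (w * x₀) + cs.length z :=
    fun z hz => cs.length_mul_of_forall_length_le
      (fun x hx => by rw [mul_assoc]; exact hmin _ (mul_mem hx₀ hx)) hz
  obtain rfl : x₀ = 1 := by
    by_contra hne
    obtain ⟨k, hk, hdesc⟩ := cs.exists_isRightDescent_of_mem_parabolic (inv_mem hx₀)
      (inv_ne_one.mpr hne)
    have h₁ := hadd x₀⁻¹ (inv_mem hx₀)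
    have h₂ := hadd (x₀⁻¹ * cs.simple k) (mul_mem (inv_mem hx₀) (cs.simple_mem_parabolic hk))
    simp only [mul_inv_cancel_right, ← mul_assoc] at h₁ h₂
    have := hw k hk
    unfold IsRightDescent at hdesc
    omega
  simpa using hmin

theorem length_mul_of_mem_minRight {K : Set B} {w v : W} (hw : w ∈ cs.minRight K)
    (hv : v ∈ cs.parabolic K) : cs.length (w * v) = cs.length w + cs.length v :=
  cs.length_mul_of_forall_length_le (cs.forall_length_le_mul_of_mem_minRight hw) hv

theorem isRightDescent_mul_inv_iff {x y : W} {k j : B}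
    (hconj : y * cs.simple k * y⁻¹ = cs.simple j)
    (hlen : cs.length (y * cs.simple k) = cs.length y + 1) :
    cs.IsRightDescent (x * y⁻¹) j ↔ cs.IsRightDescent x k := by
  have hy : ¬ cs.IsRightInversion y⁻¹ (cs.simple j) := by
    rintro ⟨-, hlt⟩
    have e : y⁻¹ * cs.simple j = (y * cs.simple k)⁻¹ := by
      rw [← hconj, mul_inv_rev, inv_simple]
      group
    rw [e, length_inv, length_inv, hlen] at hlt
    omega
  have hk : y⁻¹ * cs.simple j * y⁻¹⁻¹ = cs.simple k := by rw [← hconj]; group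
  rw [← isRightInversion_simple_iff_isRightDescent, ← isRightInversion_simple_iff_isRightDescent,
    isRightInversion_mul_iff, hk]
  tauto

end CoxeterSystem

theorem length_wu_yinv (δI : B ≃ B) (J J' : Set B) (y : W)
    (hconj : ∀ j ∈ J, ∃ j' ∈ J', y * cs.simple (δI j) * y⁻¹ = cs.simple j' ∧
      cs.length (y * cs.simple (δI j)) = cs.length y + 1)
    (w : W) (hw : w ∈ cs.minRight (δI '' J))
    (u : W) (hu : u ∈ cs.parabolic (δI '' J)) :
    cs.length (w * u * y⁻¹) = cs.length (w * y⁻¹) + cs.length u := by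
  induction hu using cs.parabolic_induction_right with
  | one => simp
  | mul_simple u hu k hk ih =>
    obtain ⟨j, hj, rfl⟩ := hk
    obtain ⟨j', -, hc, hlen⟩ := hconj j hj
    have hdesc : cs.IsRightDescent (w * u * y⁻¹) j' ↔ cs.IsRightDescent u (δI j) := by
      rw [cs.isRightDescent_mul_inv_iff hc hlen, IsRightDescent, IsRightDescent, mul_assoc,
        cs.length_mul_of_mem_minRight hw hu,
        cs.length_mul_of_mem_minRight hw (mul_mem hu (cs.simple_mem_parabolic ⟨j, hj, rfl⟩))]
      omega
    have := cs.length_mul_simple_add_eq_of_iff hdesc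
    rw [show w * (u * cs.simple (δI j)) * y⁻¹ = w * u * y⁻¹ * cs.simple j' by rw [← hc]; group]
    omega
end

section
/- Let W be a Coxeter group, J ⊆ I, and suppose w₁ ∈ W^{δ(J)} and u₁ ∈ W_J satisfy w₁ δ(u₁) y⁻¹ ≤ w y⁻¹ in Bruhat order, where y ∈ {}^{J'}W^{δ(J)} satisfies yδ(J) = J' and w ∈ W^{δ(J)}. Then for every u₂ ∈ W_J with u₂ ≤ u₁, we have w₁ δ(u₂) y⁻¹ ≤ w y⁻¹. -/
open CoxeterSystem
set_option autoImplicit false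

variable {B W : Type*} [Group W] {M : CoxeterMatrix B} (cs : CoxeterSystem M W)

/- ================= Auxiliary development ================= -/

open List

set_option maxHeartbeats 1600000

noncomputable section AuxBruhat

open scoped Classical

lemma aux_conj_eq_iff {G : Type*} [Group G] (a t b : G) :
    a * t * a⁻¹ = b ↔ t = a⁻¹ * b * a := by
  constructor <;> intro h
  · rw [← h]; group
  · rw [h]; group

lemma aux_eq_invmul_iff {G : Type*} [Group G] (c d t : G) :
    t = c⁻¹ * d ↔ c = d * t⁻¹ := by
  constructor <;> intro h
  · rw [h]; group
  · rw [h]; group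

/-- The sign-tracking permutation attached to a simple reflection. -/
def auxEta (i : B) : Equiv.Perm (W × ZMod 2) :=
  Function.Involutive.toPerm
    (fun p => (cs.simple i * p.1 * cs.simple i, p.2 + if p.1 = cs.simple i then 1 else 0))
    (by
      intro p
      have h1 : cs.simple i * (cs.simple i * p.1 * cs.simple i) * cs.simple i = p.1 := by
        simp [mul_assoc, cs.simple_mul_simple_cancel_left, cs.simple_mul_simple_self]
      have h2 : (cs.simple i * p.1 * cs.simple i = cs.simple i) ↔ (p.1 = cs.simple i) := by
        constructor
        · intro h
          have := congrArg (fun z => cs.simple i * z * cs.simple i) h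
          simpa [mul_assoc, cs.simple_mul_simple_cancel_left, cs.simple_mul_simple_self]
            using this
        · intro h; rw [h]; simp [cs.simple_mul_simple_cancel_left]
      ext
      · exact h1
      · simp only [h2]
        split_ifs with h
        · show p.2 + 1 + 1 = p.2
          rw [add_assoc]
          norm_num
          decide
        · simp)

lemma auxEta_apply (i : B) (p : W × ZMod 2) :
    auxEta cs i p = (cs.simple i * p.1 * cs.simple i, p.2 + if p.1 = cs.simple i then 1 else 0) :=
  rfl

lemma aux_conj_pow (i i' : B) (k : ℕ) :
    cs.simple i' * (cs.simple i * cs.simple i') ^ k * cs.simple i'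
      = ((cs.simple i * cs.simple i') ^ k)⁻¹ := by
  induction k with
  | zero => simp [cs.simple_mul_simple_self]
  | succ k ih =>
      have h0 : cs.simple i' * (cs.simple i * cs.simple i') * cs.simple i'
          = (cs.simple i * cs.simple i')⁻¹ := by
        rw [mul_inv_rev]
        simp [mul_assoc, cs.simple_mul_simple_cancel_left, cs.inv_simple]
      rw [pow_succ]
      calc cs.simple i' * ((cs.simple i * cs.simple i') ^ k * (cs.simple i * cs.simple i'))
            * cs.simple i'
          = (cs.simple i' * (cs.simple i * cs.simple i') ^ k * cs.simple i') *
            (cs.simple i' * (cs.simple i * cs.simple i') * cs.simple i') := by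
            simp [mul_assoc, cs.simple_mul_simple_cancel_left]
        _ = ((cs.simple i * cs.simple i') ^ k)⁻¹ * (cs.simple i * cs.simple i')⁻¹ := by
            rw [ih, h0]
        _ = ((cs.simple i * cs.simple i') ^ k * (cs.simple i * cs.simple i'))⁻¹ := by
            rw [← inv_pow, ← pow_succ, inv_pow, pow_succ]

lemma aux_conj_pow' (i i' : B) (k : ℕ) :
    ((cs.simple i * cs.simple i') ^ k)⁻¹ * cs.simple i' * (cs.simple i * cs.simple i') ^ k
      = ((cs.simple i * cs.simple i') ^ (2*k))⁻¹ * cs.simple i' := by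
  have h := aux_conj_pow cs i i' k
  calc ((cs.simple i * cs.simple i') ^ k)⁻¹ * cs.simple i' * (cs.simple i * cs.simple i') ^ k
      = ((cs.simple i * cs.simple i') ^ k)⁻¹ *
          (cs.simple i' * (cs.simple i * cs.simple i') ^ k * cs.simple i') * cs.simple i' := by
        simp [mul_assoc, cs.simple_mul_simple_cancel_right, cs.simple_mul_simple_self]
    _ = ((cs.simple i * cs.simple i') ^ k)⁻¹ * ((cs.simple i * cs.simple i') ^ k)⁻¹
          * cs.simple i' := by rw [h]
    _ = ((cs.simple i * cs.simple i') ^ (2*k))⁻¹ * cs.simple i' := by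
        rw [← mul_inv_rev, ← pow_add, two_mul]

lemma aux_cond1 (i i' : B) (k : ℕ) (t : W) :
    ((cs.simple i * cs.simple i') ^ k * t * (((cs.simple i * cs.simple i') ^ k))⁻¹ = cs.simple i')
      ↔ ((cs.simple i * cs.simple i') ^ (2*k) = cs.simple i' * t⁻¹) := by
  rw [aux_conj_eq_iff, aux_conj_pow' cs i i' k, aux_eq_invmul_iff]

lemma aux_sjs (i i' : B) :
    (cs.simple i * cs.simple i')⁻¹ * cs.simple i' * (cs.simple i * cs.simple i')⁻¹
      = cs.simple i' := by
  rw [mul_inv_rev, cs.inv_simple, cs.inv_simple]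
  simp [mul_assoc, cs.simple_mul_simple_cancel_left, cs.simple_mul_simple_self]

lemma aux_cond2 (i i' : B) (k : ℕ) (t : W) :
    (cs.simple i' * ((cs.simple i * cs.simple i') ^ k * t * (((cs.simple i * cs.simple i') ^ k))⁻¹)
        * cs.simple i' = cs.simple i)
      ↔ ((cs.simple i * cs.simple i') ^ (2*k+1) = cs.simple i' * t⁻¹) := by
  set r := cs.simple i * cs.simple i' with hr
  have h1 : (cs.simple i')⁻¹ * cs.simple i * cs.simple i' = r⁻¹ * cs.simple i' := by
    simp only [hr, mul_inv_rev, cs.inv_simple]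
  have key : (r ^ k)⁻¹ * (r⁻¹ * cs.simple i') * r ^ k = (r ^ (2*k+1))⁻¹ * cs.simple i' := by
    calc (r ^ k)⁻¹ * (r⁻¹ * cs.simple i') * r ^ k
        = (r ^ (k+1))⁻¹ * cs.simple i' * r ^ (k+1) * r⁻¹ := by group
      _ = (r ^ (2*(k+1)))⁻¹ * cs.simple i' * r⁻¹ := by rw [aux_conj_pow' cs i i' (k+1)]
      _ = (r ^ (2*k+1))⁻¹ * (r⁻¹ * cs.simple i' * r⁻¹) := by
          rw [show 2*(k+1) = (2*k+1)+1 from by omega]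
          group
      _ = (r ^ (2*k+1))⁻¹ * cs.simple i' := by rw [aux_sjs cs i i']
  have hs : cs.simple i' = (cs.simple i')⁻¹ := (cs.inv_simple i').symm
  calc (cs.simple i' * (r ^ k * t * (r ^ k)⁻¹) * cs.simple i' = cs.simple i)
      ↔ (cs.simple i' * (r ^ k * t * (r ^ k)⁻¹) * (cs.simple i')⁻¹ = cs.simple i) := by
        rw [← hs]
    _ ↔ (r ^ k * t * (r ^ k)⁻¹ = (cs.simple i')⁻¹ * cs.simple i * cs.simple i') := by
        rw [aux_conj_eq_iff]
    _ ↔ (t = (r ^ k)⁻¹ * (r⁻¹ * cs.simple i') * r ^ k) := by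
        rw [h1, aux_conj_eq_iff]
    _ ↔ (t = (r ^ (2*k+1))⁻¹ * cs.simple i') := by rw [key]
    _ ↔ _ := aux_eq_invmul_iff _ _ _

lemma auxEta_pow_apply (i i' : B) (k : ℕ) (t : W) (ε : ZMod 2) :
    ((auxEta cs i * auxEta cs i') ^ k) (t, ε)
      = ((cs.simple i * cs.simple i') ^ k * t * ((cs.simple i * cs.simple i') ^ k)⁻¹,
          ε + ∑ l ∈ Finset.range (2 * k),
            (if (cs.simple i * cs.simple i') ^ l = cs.simple i' * t⁻¹ then (1 : ZMod 2) else 0)) := by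
  induction k with
  | zero => simp
  | succ k ih =>
      rw [pow_succ' (auxEta cs i * auxEta cs i') k]
      have step : ∀ q : W × ZMod 2, (auxEta cs i * auxEta cs i') q
          = ((cs.simple i * cs.simple i') * q.1 * (cs.simple i * cs.simple i')⁻¹,
              q.2 + ((if q.1 = cs.simple i' then (1:ZMod 2) else 0)
                + (if cs.simple i' * q.1 * cs.simple i' = cs.simple i then (1:ZMod 2) else 0))) := by
        intro q
        show auxEta cs i (auxEta cs i' q) = _
        rw [auxEta_apply, auxEta_apply]
        dsimp only
        simp only [Prod.mk.injEq]
        constructor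
        · simp [mul_inv_rev, cs.inv_simple, mul_assoc]
        · rw [add_assoc]
      rw [Equiv.Perm.mul_apply, ih, step]
      dsimp only
      simp only [Prod.mk.injEq]
      set r := cs.simple i * cs.simple i' with hr
      constructor
      · calc r * (r ^ k * t * (r ^ k)⁻¹) * r⁻¹
            = (r * r ^ k) * t * ((r * r ^ k))⁻¹ := by group
          _ = r ^ (k+1) * t * (r ^ (k+1))⁻¹ := by rw [← pow_succ']
      · rw [aux_cond1 cs i i' k t, aux_cond2 cs i i' k t]
        have h2 : 2 * (k+1) = (2*k) + 1 + 1 := by omega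
        rw [h2, Finset.sum_range_succ, Finset.sum_range_succ]
        rw [add_assoc, add_assoc]

lemma auxEta_liftable : M.IsLiftable (auxEta cs) := by
  intro i i'
  set m := M i i' with hm
  apply Equiv.ext
  rintro ⟨t, ε⟩
  set r := cs.simple i * cs.simple i' with hr
  have hrm : r ^ m = 1 := cs.simple_mul_simple_pow i i'
  have hconj : r ^ m * t * (r ^ m)⁻¹ = t := by rw [hrm]; group
  have hsum : (∑ l ∈ Finset.range (2 * m),
      (if r ^ l = cs.simple i' * t⁻¹ then (1 : ZMod 2) else 0)) = 0 := by
    have h2m : 2 * m = m + m := by omega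
    rw [h2m, Finset.sum_range_add]
    have hper : ∀ l ∈ Finset.range m,
        (if r ^ (m + l) = cs.simple i' * t⁻¹ then (1:ZMod 2) else 0)
          = (if r ^ l = cs.simple i' * t⁻¹ then (1:ZMod 2) else 0) := by
      intro l _
      rw [pow_add, hrm, one_mul]
    rw [Finset.sum_congr rfl hper, ← Finset.sum_add_distrib]
    have hz : ∀ l ∈ Finset.range m,
        ((if r ^ l = cs.simple i' * t⁻¹ then (1:ZMod 2) else 0)
          + (if r ^ l = cs.simple i' * t⁻¹ then (1:ZMod 2) else 0)) = 0 := by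
      intro l _
      split_ifs <;> decide
    rw [Finset.sum_congr rfl hz, Finset.sum_const_zero]
  show ((auxEta cs i * auxEta cs i') ^ m) (t, ε) = (1 : Equiv.Perm (W × ZMod 2)) (t, ε)
  rw [auxEta_pow_apply, ← hr, hconj, hsum, add_zero, Equiv.Perm.one_apply]

/-- The parity representation. -/
def auxPhi : W →* Equiv.Perm (W × ZMod 2) := cs.lift ⟨auxEta cs, auxEta_liftable cs⟩

lemma auxPhi_simple (i : B) : auxPhi cs (cs.simple i) = auxEta cs i :=
  cs.lift_apply_simple (auxEta_liftable cs) i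

lemma auxPhi_fst (g t : W) (ε : ZMod 2) : (auxPhi cs g (t, ε)).1 = g * t * g⁻¹ := by
  induction g using cs.simple_induction_left with
  | one => simp
  | mul_simple_left g i ih =>
      rw [map_mul, Equiv.Perm.mul_apply, auxPhi_simple]
      have : auxPhi cs g (t, ε) = ((auxPhi cs g (t, ε)).1, (auxPhi cs g (t, ε)).2) := rfl
      rw [this, ih, auxEta_apply]
      dsimp only
      rw [mul_inv_rev, cs.inv_simple]
      group

lemma auxPhi_snd (g t : W) (ε : ZMod 2) :
    (auxPhi cs g (t, ε)).2 = ε + (auxPhi cs g (t, 0)).2 := by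
  induction g using cs.simple_induction_left with
  | one => simp
  | mul_simple_left g i ih =>
      rw [map_mul, Equiv.Perm.mul_apply, Equiv.Perm.mul_apply, auxPhi_simple]
      have e1 : auxPhi cs g (t, ε) = ((auxPhi cs g (t, ε)).1, (auxPhi cs g (t, ε)).2) := rfl
      have e2 : auxPhi cs g (t, 0) = ((auxPhi cs g (t, 0)).1, (auxPhi cs g (t, 0)).2) := rfl
      rw [e1, e2, auxEta_apply, auxEta_apply]
      dsimp only
      rw [auxPhi_fst, auxPhi_fst, ih]
      ring

/-- The parity of the number of times `t` occurs as a right inversion of `g`. -/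
def auxNu (g t : W) : ZMod 2 := (auxPhi cs g (t, 0)).2

lemma auxPhi_pair (g t : W) (ε : ZMod 2) :
    auxPhi cs g (t, ε) = (g * t * g⁻¹, ε + auxNu cs g t) := by
  have : auxPhi cs g (t, ε) = ((auxPhi cs g (t, ε)).1, (auxPhi cs g (t, ε)).2) := rfl
  rw [this, auxPhi_fst, auxPhi_snd]
  rfl

lemma auxNu_mul (g h t : W) :
    auxNu cs (g * h) t = auxNu cs h t + auxNu cs g (h * t * h⁻¹) := by
  show (auxPhi cs (g * h) (t, 0)).2 = _
  rw [map_mul, Equiv.Perm.mul_apply, auxPhi_pair cs h t 0, zero_add, auxPhi_pair cs g]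

lemma auxNu_notmem (ω : List B) (t : W) (h : t ∉ cs.rightInvSeq ω) :
    auxNu cs (cs.wordProd ω) t = 0 := by
  induction ω with
  | nil => simp [auxNu]
  | cons i ω ih =>
      have hris : cs.rightInvSeq (i :: ω)
          = (cs.wordProd ω)⁻¹ * cs.simple i * cs.wordProd ω :: cs.rightInvSeq ω := rfl
      rw [hris, List.mem_cons] at h
      push_neg at h
      show (auxPhi cs (cs.wordProd (i :: ω)) (t, 0)).2 = 0
      rw [cs.wordProd_cons, map_mul, Equiv.Perm.mul_apply,
        auxPhi_pair cs (cs.wordProd ω) t 0, zero_add, auxPhi_simple, auxEta_apply]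
      dsimp only
      have hcond : ¬ (cs.wordProd ω * t * (cs.wordProd ω)⁻¹ = cs.simple i) := by
        rw [aux_conj_eq_iff]
        intro hc
        exact h.1 hc
      rw [if_neg hcond, add_zero]
      exact ih h.2

lemma auxNu_refl {t : W} (ht : cs.IsReflection t) (ε : ZMod 2) :
    auxPhi cs t (t, ε) = (t, ε + 1) := by
  obtain ⟨x, i, rfl⟩ := ht
  induction x using cs.simple_induction_left generalizing ε with
  | one =>
      simp only [one_mul, inv_one, mul_one]
      rw [auxPhi_simple, auxEta_apply]
      simp [cs.simple_mul_simple_cancel_right]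
  | mul_simple_left x k ih =>
      have hrw : cs.simple k * x * cs.simple i * (cs.simple k * x)⁻¹
          = cs.simple k * (x * cs.simple i * x⁻¹) * cs.simple k := by
        rw [mul_inv_rev, cs.inv_simple]
        group
      set t₀ := x * cs.simple i * x⁻¹ with ht₀
      rw [hrw]
      have hmul : cs.simple k * t₀ * cs.simple k
          = cs.simple k * (t₀ * cs.simple k) := by group
      rw [hmul, map_mul, map_mul, Equiv.Perm.mul_apply, Equiv.Perm.mul_apply, auxPhi_simple]
      have hc1 : (cs.simple k * (t₀ * cs.simple k) = cs.simple k) ↔ (t₀ = cs.simple k) := by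
        constructor
        · intro hc
          have := congrArg (fun z => cs.simple k * z * cs.simple k) hc
          simpa [mul_assoc, cs.simple_mul_simple_cancel_left, cs.simple_mul_simple_self]
            using this
        · intro hc; rw [hc]; simp [cs.simple_mul_simple_cancel_left, cs.simple_mul_simple_self]
      have hfix : cs.simple k * (cs.simple k * (t₀ * cs.simple k)) * cs.simple k = t₀ := by
        simp [mul_assoc, cs.simple_mul_simple_cancel_left, cs.simple_mul_simple_self]
      rw [auxEta_apply cs k (cs.simple k * (t₀ * cs.simple k), ε)]
      dsimp only
      rw [hfix, ih, auxEta_apply]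
      dsimp only
      simp only [Prod.mk.injEq]
      have hz : ∀ a : ZMod 2, a + 1 + 1 = a := by decide
      constructor
      · group
      · rw [hc1]
        split_ifs with hck
        · show ε + 1 + 1 + 1 = ε + 1
          rw [hz (ε + 1)]
        · show ε + 0 + 1 + 0 = ε + 1
          rw [add_zero, add_zero]

lemma auxNu_isRightInversion_iff {t : W} (ht : cs.IsReflection t) (g : W) :
    cs.length (g * t) < cs.length g ↔ auxNu cs g t = 1 := by
  constructor
  · intro hlt
    set u := g * t with hu
    have hut : u * t = g := by rw [hu, mul_assoc, ht.mul_self, mul_one]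
    obtain ⟨τ, hτred, hτ⟩ := cs.exists_reduced_word' u
    have hnot : t ∉ cs.rightInvSeq τ := by
      intro hmem
      have := (cs.isRightInversion_of_mem_rightInvSeq hτred hmem).2
      rw [← hτ, hut] at this
      omega
    have h0 : auxNu cs u t = 0 := by
      have := auxNu_notmem cs τ t hnot
      rwa [← hτ] at this
    have : auxNu cs g t = auxNu cs t t + auxNu cs u (t * t * t⁻¹) := by
      rw [← hut]
      exact auxNu_mul cs u t t
    rw [this]
    have h1 : auxNu cs t t = 1 := by
      unfold auxNu
      rw [auxNu_refl cs ht]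
      simp
    have h2 : t * t * t⁻¹ = t := mul_inv_cancel_right t t
    rw [h1, h2, h0, add_zero]
  · intro h1
    obtain ⟨γ, hγred, hγ⟩ := cs.exists_reduced_word' g
    by_cases hmem : t ∈ cs.rightInvSeq γ
    · have := (cs.isRightInversion_of_mem_rightInvSeq hγred hmem).2
      rwa [← hγ] at this
    · exfalso
      have := auxNu_notmem cs γ t hmem
      rw [← hγ] at this
      rw [this] at h1
      exact absurd h1 (by decide)

lemma aux_strong_exchange {ω : List B} {t : W} (ht : cs.IsReflection t)
    (hlt : cs.length (cs.wordProd ω * t) < cs.length (cs.wordProd ω)) :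
    ∃ j, j < ω.length ∧ cs.wordProd ω * t = cs.wordProd (ω.eraseIdx j) := by
  have h1 : auxNu cs (cs.wordProd ω) t = 1 :=
    (auxNu_isRightInversion_iff cs ht (cs.wordProd ω)).mp hlt
  have hmem : t ∈ cs.rightInvSeq ω := by
    by_contra hnot
    rw [auxNu_notmem cs ω t hnot] at h1
    exact absurd h1 (by decide)
  obtain ⟨j, hj, hje⟩ := List.getElem_of_mem hmem
  rw [cs.length_rightInvSeq] at hj
  refine ⟨j, hj, ?_⟩
  have : (cs.rightInvSeq ω).getD j 1 = t := by
    rw [List.getD_eq_getElem _ _ (by rw [cs.length_rightInvSeq]; exact hj)]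
    exact hje
  rw [← this]
  exact cs.wordProd_mul_getD_rightInvSeq ω j

lemma aux_deletion (ω : List B) :
    ∃ ω', ω' <+ ω ∧ cs.IsReduced ω' ∧ cs.wordProd ω' = cs.wordProd ω := by
  induction ω using List.reverseRecOn with
  | nil => exact ⟨[], by simp, by simp [CoxeterSystem.IsReduced], rfl⟩
  | append_singleton γ i ih =>
      obtain ⟨γ', hsub, hred, hprod⟩ := ih
      have hlen : cs.length (cs.wordProd γ) = γ'.length := by rw [← hprod]; exact hred
      rcases cs.length_mul_simple (cs.wordProd γ) i with hup | hdown
      · refine ⟨γ' ++ [i], List.Sublist.append hsub (List.Sublist.refl _), ?_, ?_⟩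
        · show cs.length (cs.wordProd (γ' ++ [i])) = (γ' ++ [i]).length
          rw [cs.wordProd_append, cs.wordProd_singleton, hprod, hup]
          simp [hlen]
        · simp [cs.wordProd_append, hprod]
      · have hdesc : cs.length (cs.wordProd γ' * cs.simple i) < cs.length (cs.wordProd γ') := by
          rw [hprod]
          omega
        obtain ⟨j, hj, hej⟩ := aux_strong_exchange cs (cs.isReflection_simple i) hdesc
        refine ⟨γ'.eraseIdx j,
          ((γ'.eraseIdx_sublist j).trans hsub).trans (List.sublist_append_left γ [i]), ?_, ?_⟩
        · show cs.length (cs.wordProd (γ'.eraseIdx j)) = (γ'.eraseIdx j).length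
          rw [← hej, hprod, List.length_eraseIdx, if_pos hj]
          omega
        · rw [← hej, hprod]
          simp [cs.wordProd_append]

lemma aux_eraseIdx_append_left {α : Type*} :
    ∀ (l₁ : List α) (j : ℕ) (l₂ : List α), j < l₁.length →
      (l₁ ++ l₂).eraseIdx j = l₁.eraseIdx j ++ l₂ := by
  intro l₁
  induction l₁ with
  | nil => intro j l₂ h; simp at h
  | cons a l ih =>
      intro j l₂ h
      match j with
      | 0 => rfl
      | (j+1) =>
          simp only [List.cons_append, List.eraseIdx_cons_succ]
          rw [ih j l₂ (by simpa using h)]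

lemma aux_eraseIdx_append_right {α : Type*} :
    ∀ (l₁ : List α) (j : ℕ) (l₂ : List α), l₁.length ≤ j →
      (l₁ ++ l₂).eraseIdx j = l₁ ++ l₂.eraseIdx (j - l₁.length) := by
  intro l₁
  induction l₁ with
  | nil => intro j l₂ _; rfl
  | cons a l ih =>
      intro j l₂ h
      match j with
      | 0 => simp at h
      | (j+1) =>
          simp only [List.cons_append, List.eraseIdx_cons_succ]
          rw [ih j l₂ (by simpa using h)]
          have hidx : j + 1 - (a :: l).length = j - l.length := by simp
          rw [hidx]

/-- A single step in the Bruhat chain order. -/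
def auxStep (a b : W) : Prop :=
  ∃ t, cs.IsReflection t ∧ b = a * t ∧ cs.length a < cs.length b

/-- The Bruhat chain order. -/
def auxChain : W → W → Prop := Relation.ReflTransGen (auxStep cs)

lemma aux_chain_subword {v w : W} (h : auxChain cs v w) :
    ∀ ω, cs.IsReduced ω → cs.wordProd ω = w → ∃ τ, τ <+ ω ∧ cs.wordProd τ = v := by
  induction h with
  | refl => exact fun ω _ hprod => ⟨ω, List.Sublist.refl ω, hprod⟩
  | tail hab hbc ih =>
      rename_i b c
      intro ω hred hprod
      obtain ⟨t, ht, hc, hlt⟩ := hbc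
      have hb : cs.wordProd ω * t = b := by
        rw [hprod, hc, mul_assoc, ht.mul_self, mul_one]
      have hlt' : cs.length (cs.wordProd ω * t) < cs.length (cs.wordProd ω) := by
        rw [hb, hprod]
        exact hlt
      obtain ⟨j, hj, hej⟩ := aux_strong_exchange cs ht hlt'
      obtain ⟨σ, hσsub, hσred, hσprod⟩ := aux_deletion cs (ω.eraseIdx j)
      obtain ⟨τ, hτsub, hτprod⟩ := ih σ hσred (by rw [hσprod, ← hej, hb])
      exact ⟨τ, hτsub.trans (hσsub.trans (ω.eraseIdx_sublist j)), hτprod⟩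

lemma aux_subdecomp {α : Type*} {ω' ω : List α} (h : ω' <+ ω) :
    ω' = ω ∨ ∃ α' αl i β, ω = αl ++ i :: β ∧ ω' = α' ++ β ∧ α' <+ αl := by
  induction h with
  | slnil => left; rfl
  | cons a h ih =>
      rcases ih with rfl | ⟨α', αl, i, β, h1, h2, h3⟩
      · right; exact ⟨[], [], a, _, rfl, rfl, List.Sublist.refl _⟩
      · right
        exact ⟨α', a :: αl, i, β, by rw [h1]; rfl, h2,
          h3.trans (List.sublist_cons_self a αl)⟩
  | cons_cons a h ih =>
      rcases ih with rfl | ⟨α', αl, i, β, h1, h2, h3⟩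
      · left; rfl
      · right
        exact ⟨a :: α', a :: αl, i, β, by rw [h1]; rfl, by rw [h2]; rfl, h3.cons₂ a⟩

theorem aux_inner (α' αl : List B) (i : B) (β : List B) (hsub : α' <+ αl)
    (hred : cs.IsReduced (αl ++ i :: β)) (hred' : cs.IsReduced (α' ++ β)) :
    ∃ ω'', ω'' <+ (αl ++ i :: β) ∧ cs.IsReduced ω'' ∧
      auxStep cs (cs.wordProd (α' ++ β)) (cs.wordProd ω'') := by
  set t := (cs.wordProd β)⁻¹ * cs.simple i * cs.wordProd β with htdef
  have ht : cs.IsReflection t := ⟨(cs.wordProd β)⁻¹, i, by rw [inv_inv]⟩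
  set v := cs.wordProd (α' ++ β) with hv
  have hxv : cs.wordProd (α' ++ i :: β) = v * t := by
    rw [hv, htdef]
    simp [cs.wordProd_append, cs.wordProd_cons, mul_assoc]
  have hvlen : cs.length v = α'.length + β.length := by
    have := hred'
    rw [CoxeterSystem.IsReduced] at this
    rw [hv, this, List.length_append]
  have hne : cs.length (v * t) ≠ cs.length v := ht.length_mul_left_ne v
  rcases Nat.lt_or_ge (cs.length v) (cs.length (v * t)) with hgt | hlt
  · -- length goes up: α' ++ i :: β is reduced
    have hlistlen : (α' ++ i :: β).length = α'.length + 1 + β.length := by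
      simp only [List.length_append, List.length_cons]
      omega
    have hxle : cs.length (v * t) ≤ α'.length + 1 + β.length := by
      have := cs.length_wordProd_le (α' ++ i :: β)
      rw [hxv, hlistlen] at this
      exact this
    have hxeq : cs.length (v * t) = α'.length + 1 + β.length := by omega
    refine ⟨α' ++ i :: β, List.Sublist.append hsub (List.Sublist.refl _), ?_, t, ht, hxv, ?_⟩
    · show cs.length (cs.wordProd (α' ++ i :: β)) = (α' ++ i :: β).length
      rw [hxv, hxeq, hlistlen]
    · rw [hxv]
      omega
  · -- length goes down: exchange
    have hlt' : cs.length (v * t) < cs.length v := by omega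
    have hlt'' : cs.length (cs.wordProd (α' ++ β) * t) < cs.length (cs.wordProd (α' ++ β)) := by
      rw [← hv]; exact hlt'
    obtain ⟨j, hj, hej⟩ := aux_strong_exchange cs ht hlt''
    rw [← hv] at hej
    have hjlen : j < α'.length + β.length := by
      rw [List.length_append] at hj; exact hj
    have hjlt : j < α'.length := by
      by_contra hge
      push_neg at hge
      rw [aux_eraseIdx_append_right α' j β hge] at hej
      have h1 : cs.wordProd (β.eraseIdx (j - α'.length)) = cs.simple i * cs.wordProd β := by
        have e1 : v * t = cs.wordProd α' * (cs.simple i * cs.wordProd β) := by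
          rw [hv, htdef]
          simp [cs.wordProd_append, mul_assoc]
        have e2 : v * t = cs.wordProd α' * cs.wordProd (β.eraseIdx (j - α'.length)) := by
          rw [hej, cs.wordProd_append]
        exact (mul_left_cancel (e2.symm.trans e1))
      have h2 : cs.IsReduced (i :: β) := by
        have := hred.drop αl.length
        rwa [List.drop_left] at this
      have h3 : cs.length (cs.simple i * cs.wordProd β) = β.length + 1 := by
        have := h2
        rw [CoxeterSystem.IsReduced, cs.wordProd_cons] at this
        rw [this]
        simp
      have h4 : cs.length (cs.wordProd (β.eraseIdx (j - α'.length)))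
          ≤ (β.eraseIdx (j - α'.length)).length := cs.length_wordProd_le _
      rw [h1, h3, List.length_eraseIdx, if_pos (by omega)] at h4
      omega
    rw [aux_eraseIdx_append_left α' j β hjlt] at hej
    set α'' := α'.eraseIdx j with hα''
    have hlen'' : α''.length = α'.length - 1 := by
      rw [hα'', List.length_eraseIdx, if_pos hjlt]
    have hprodnew : cs.wordProd (α'' ++ i :: β) = v := by
      have hx : cs.wordProd α'' * cs.wordProd β = v * t := by
        rw [hej, cs.wordProd_append]
      calc cs.wordProd (α'' ++ i :: β)
          = cs.wordProd α'' * (cs.simple i * cs.wordProd β) := by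
            simp [cs.wordProd_append, cs.wordProd_cons]
        _ = (cs.wordProd α'' * cs.wordProd β) * ((cs.wordProd β)⁻¹
              * cs.simple i * cs.wordProd β) := by group
        _ = (v * t) * t := by rw [hx, ← htdef]
        _ = v := by rw [mul_assoc, ht.mul_self, mul_one]
    have hrednew : cs.IsReduced (α'' ++ i :: β) := by
      show cs.length (cs.wordProd (α'' ++ i :: β)) = _
      rw [hprodnew]
      simp only [List.length_append, List.length_cons]
      omega
    have hne2 : α'' ≠ αl := by
      intro hcontra
      have h5 : α'.length ≤ αl.length := hsub.length_le
      have h6 : α''.length = αl.length := by rw [hcontra]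
      omega
    have hsub2 : α'' <+ αl := (α'.eraseIdx_sublist j).trans hsub
    rcases aux_subdecomp hsub2 with heq | ⟨A', A, i₂, Bb, hA1, hA2, hA3⟩
    · exact absurd heq hne2
    have hlenA' : A'.length < α'.length := by
      have : α''.length = A'.length + Bb.length := by rw [hA2, List.length_append]
      omega
    have hworded : αl ++ i :: β = A ++ i₂ :: (Bb ++ i :: β) := by rw [hA1]; simp
    have hworded' : α'' ++ i :: β = A' ++ (Bb ++ i :: β) := by rw [hA2]; simp
    obtain ⟨ω'', hsubw, hredw, hstepw⟩ := aux_inner A' A i₂ (Bb ++ i :: β) hA3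
      (by rw [← hworded]; exact hred) (by rw [← hworded', hα'']; exact hrednew)
    refine ⟨ω'', by rw [hworded]; exact hsubw, hredw, ?_⟩
    have hve : cs.wordProd (A' ++ (Bb ++ i :: β)) = v := by rw [← hworded']; exact hprodnew
    rw [← hve]
    exact hstepw
termination_by α'.length

theorem aux_subword_chain (ω ω' : List B) (hred : cs.IsReduced ω) (hsub : ω' <+ ω)
    (hred' : cs.IsReduced ω') : auxChain cs (cs.wordProd ω') (cs.wordProd ω) := by
  by_cases heq : ω' = ω
  · rw [heq]
    exact Relation.ReflTransGen.refl
  · rcases aux_subdecomp hsub with heq' | ⟨α', αl, i, β, h1, h2, h3⟩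
    · exact absurd heq' heq
    obtain ⟨ω'', hsub'', hred'', hstep⟩ := aux_inner cs α' αl i β h3
      (by rw [← h1]; exact hred) (by rw [← h2]; exact hred')
    have hlenlt : ω'.length < ω''.length := by
      obtain ⟨t, ht, hmul, hlt⟩ := hstep
      have e1 : cs.length (cs.wordProd (α' ++ β)) = ω'.length := by
        rw [← h2]; exact hred'
      have e2 : cs.length (cs.wordProd ω'') = ω''.length := hred''
      omega
    have hlenle : ω''.length ≤ ω.length := by
      have := hsub''.length_le
      rw [← h1] at this
      exact this
    have hchain : auxChain cs (cs.wordProd ω'') (cs.wordProd ω) :=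
      aux_subword_chain ω ω'' hred (by rw [h1]; exact hsub'') hred''
    refine Relation.ReflTransGen.head ?_ hchain
    rw [h2]
    exact hstep
termination_by ω.length - ω'.length
decreasing_by
  have : ω'.length < ω.length := by
    have := hsub.length_le
    omega
  omega

lemma aux_le_all {v w : W} (h : cs.bruhatLE v w) (ω : List B) (hred : cs.IsReduced ω)
    (hprod : cs.wordProd ω = w) : ∃ τ, τ <+ ω ∧ cs.wordProd τ = v := by
  obtain ⟨ω₀, h0red, h0prod, σ, hσ, hσprod⟩ := h
  obtain ⟨σr, hsr, hsrred, hsrprod⟩ := aux_deletion cs σ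
  have hchain : auxChain cs v w := by
    have := aux_subword_chain cs ω₀ σr h0red (hsr.trans hσ) hsrred
    rwa [hsrprod, hσprod, h0prod] at this
  exact aux_chain_subword cs hchain ω hred hprod

lemma aux_word {K : Set B} {u : W} (hu : u ∈ cs.parabolic K) :
    ∃ σ : List B, (∀ x ∈ σ, x ∈ K) ∧ cs.wordProd σ = u := by
  refine Subgroup.closure_induction ?_ ?_ ?_ ?_ hu
  · rintro x ⟨k, hk, rfl⟩
    exact ⟨[k], by simpa using hk, by simp⟩
  · exact ⟨[], by simp, by simp⟩
  · rintro x y _ _ ⟨σ₁, h1, rfl⟩ ⟨σ₂, h2, rfl⟩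
    refine ⟨σ₁ ++ σ₂, ?_, by rw [cs.wordProd_append]⟩
    intro z hz
    rcases List.mem_append.mp hz with hz | hz
    · exact h1 z hz
    · exact h2 z hz
  · rintro x _ ⟨σ, h1, rfl⟩
    exact ⟨σ.reverse, fun z hz => h1 z (List.mem_reverse.mp hz), by rw [cs.wordProd_reverse]⟩

lemma aux_wordmem {K : Set B} {σ : List B} (h : ∀ x ∈ σ, x ∈ K) :
    cs.wordProd σ ∈ cs.parabolic K := by
  induction σ with
  | nil => rw [cs.wordProd_nil]; exact one_mem _
  | cons i σ ih =>
      rw [cs.wordProd_cons]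
      exact mul_mem (Subgroup.subset_closure ⟨i, h i List.mem_cons_self, rfl⟩)
        (ih fun x hx => h x (List.mem_cons_of_mem i hx))

lemma aux_kword {K : Set B} {u : W} (hu : u ∈ cs.parabolic K) :
    ∃ σ : List B, cs.IsReduced σ ∧ (∀ x ∈ σ, x ∈ K) ∧ cs.wordProd σ = u := by
  obtain ⟨σ₀, h0, hprod⟩ := aux_word cs hu
  obtain ⟨σ, hsub, hred, hprod'⟩ := aux_deletion cs σ₀
  exact ⟨σ, hred, fun x hx => h0 x (hsub.subset hx), by rw [hprod', hprod]⟩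

lemma aux_min_add {K : Set B} {a : W}
    (hmin : ∀ b ∈ cs.parabolic K, cs.length a ≤ cs.length (a * b)) (β : List B) :
    cs.IsReduced β → (∀ x ∈ β, x ∈ K) →
      cs.length (a * cs.wordProd β) = cs.length a + β.length := by
  induction β using List.reverseRecOn with
  | nil => intro _ _; simp
  | append_singleton β₀ k ih =>
      intro hred hK
      have hβ₀red : cs.IsReduced β₀ := by
        have := hred.take β₀.length
        rwa [List.take_left] at this
      have hβ₀K : ∀ x ∈ β₀, x ∈ K := fun x hx => hK x (List.mem_append_left _ hx)
      have ihv := ih hβ₀red hβ₀K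
      have hprod : a * cs.wordProd (β₀ ++ [k]) = (a * cs.wordProd β₀) * cs.simple k := by
        simp [cs.wordProd_append, mul_assoc]
      have hk : k ∈ K := hK k (by simp)
      rcases cs.length_mul_simple (a * cs.wordProd β₀) k with hup | hdown
      · rw [hprod, hup, ihv]
        simp only [List.length_append, List.length_cons, List.length_nil]
        omega
      · exfalso
        obtain ⟨A, hAred, hAg⟩ := cs.exists_reduced_word' a
        have hABprod : cs.wordProd (A ++ β₀) = a * cs.wordProd β₀ := by
          rw [cs.wordProd_append, ← hAg]
        have hdesc2 : cs.length (cs.wordProd (A ++ β₀) * cs.simple k)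
            < cs.length (cs.wordProd (A ++ β₀)) := by
          rw [hABprod]
          omega
        obtain ⟨j, hj, hej⟩ := aux_strong_exchange cs (cs.isReflection_simple k) hdesc2
        rw [List.length_append] at hj
        have hAlen : A.length = cs.length a := by rw [hAg]; exact hAred.symm
        by_cases hjA : j < A.length
        · rw [aux_eraseIdx_append_left A j β₀ hjA, hABprod] at hej
          have hbmem : cs.wordProd β₀ * cs.simple k * (cs.wordProd β₀)⁻¹ ∈ cs.parabolic K := by
            have h1 : cs.wordProd β₀ ∈ cs.parabolic K := aux_wordmem cs hβ₀K
            have h2 : cs.simple k ∈ cs.parabolic K := Subgroup.subset_closure ⟨k, hk, rfl⟩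
            exact mul_mem (mul_mem h1 h2) (inv_mem h1)
          have heq : a * (cs.wordProd β₀ * cs.simple k * (cs.wordProd β₀)⁻¹)
              = cs.wordProd (A.eraseIdx j) := by
            have e1 : cs.wordProd (A.eraseIdx j ++ β₀)
                = cs.wordProd (A.eraseIdx j) * cs.wordProd β₀ := cs.wordProd_append _ _
            rw [e1] at hej
            calc a * (cs.wordProd β₀ * cs.simple k * (cs.wordProd β₀)⁻¹)
                = (a * cs.wordProd β₀ * cs.simple k) * (cs.wordProd β₀)⁻¹ := by group
              _ = (cs.wordProd (A.eraseIdx j) * cs.wordProd β₀) * (cs.wordProd β₀)⁻¹ := by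
                  rw [hej]
              _ = cs.wordProd (A.eraseIdx j) := by group
          have hge := hmin _ hbmem
          rw [heq] at hge
          have hle : cs.length (cs.wordProd (A.eraseIdx j)) ≤ (A.eraseIdx j).length :=
            cs.length_wordProd_le _
          rw [List.length_eraseIdx, if_pos hjA] at hle
          omega
        · push_neg at hjA
          rw [aux_eraseIdx_append_right A j β₀ hjA, hABprod] at hej
          have heq2 : cs.wordProd β₀ * cs.simple k = cs.wordProd (β₀.eraseIdx (j - A.length)) := by
            have := hej
            rw [cs.wordProd_append, ← hAg, mul_assoc] at this
            exact mul_left_cancel this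
          have hredβ : cs.length (cs.wordProd (β₀ ++ [k])) = β₀.length + 1 := by
            have := hred
            rw [CoxeterSystem.IsReduced] at this
            rw [this]
            simp
          have hlhs : cs.wordProd (β₀ ++ [k]) = cs.wordProd β₀ * cs.simple k := by
            simp [cs.wordProd_append]
          have hle2 : cs.length (cs.wordProd (β₀.eraseIdx (j - A.length)))
              ≤ (β₀.eraseIdx (j - A.length)).length := cs.length_wordProd_le _
          rw [List.length_eraseIdx, if_pos (by omega)] at hle2
          rw [← heq2, ← hlhs, hredβ] at hle2
          omega

lemma aux_mll {K : Set B} {g : W}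
    (hdesc : ∀ k ∈ K, cs.length g < cs.length (g * cs.simple k))
    {b : W} (hb : b ∈ cs.parabolic K) :
    cs.length (g * b) = cs.length g + cs.length b := by
  have hSne : {n | ∃ c ∈ cs.parabolic K, cs.length (g * c) = n}.Nonempty :=
    ⟨cs.length g, 1, one_mem _, by simp⟩
  obtain ⟨c₀, hc₀, hc₀len⟩ := Nat.sInf_mem hSne
  set a := g * c₀ with ha
  have hmin : ∀ b' ∈ cs.parabolic K, cs.length a ≤ cs.length (a * b') := by
    intro b' hb'
    have he : a * b' = g * (c₀ * b') := by rw [ha]; group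
    have hmem : cs.length (a * b') ∈ {n | ∃ c ∈ cs.parabolic K, cs.length (g * c) = n} := by
      exact ⟨c₀ * b', mul_mem hc₀ hb', by rw [← he]⟩
    exact le_trans (le_of_eq hc₀len) (Nat.sInf_le hmem)
  obtain ⟨σ, hσred, hσK, hσprod⟩ := aux_kword cs (inv_mem hc₀)
  have hg : g = a * c₀⁻¹ := by rw [ha]; group
  have hga : g = a := by
    rcases List.eq_nil_or_concat σ with rfl | ⟨σ₀, k, hcat⟩
    · rw [hg, ← hσprod]
      simp
    · exfalso
      rw [List.concat_eq_append] at hcat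
      subst hcat
      have hσ₀red : cs.IsReduced σ₀ := by
        have := hσred.take σ₀.length
        rwa [List.take_left] at this
      have hσ₀K : ∀ x ∈ σ₀, x ∈ K := fun x hx => hσK x (List.mem_append_left _ hx)
      have h1 : cs.length (a * cs.wordProd σ₀) = cs.length a + σ₀.length :=
        aux_min_add cs hmin σ₀ hσ₀red hσ₀K
      have h2 : cs.length (a * cs.wordProd (σ₀ ++ [k]))
          = cs.length a + σ₀.length + 1 := by
        have := aux_min_add cs hmin (σ₀ ++ [k]) hσred hσK
        rw [this]
        simp only [List.length_append, List.length_cons, List.length_nil]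
        omega
      have hgs : g * cs.simple k = a * cs.wordProd σ₀ := by
        rw [hg, ← hσprod]
        simp [cs.wordProd_append, mul_assoc, cs.simple_mul_simple_self]
      have hglen : cs.length g = cs.length a + σ₀.length + 1 := by
        rw [hg, ← hσprod]
        exact h2
      have hk : k ∈ K := hσK k (by simp)
      have := hdesc k hk
      rw [hgs, h1] at this
      omega
  obtain ⟨β, hβred, hβK, hβprod⟩ := aux_kword cs hb
  have := aux_min_add cs (hga ▸ hmin) β hβred hβK
  rw [hβprod] at this
  have hlb : cs.length b = β.length := by rw [← hβprod]; exact hβred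
  omega

lemma aux_mll_left {K : Set B} {y : W}
    (hdesc : ∀ k ∈ K, cs.length y < cs.length (cs.simple k * y))
    {b : W} (hb : b ∈ cs.parabolic K) :
    cs.length (b * y) = cs.length b + cs.length y := by
  have hdesc' : ∀ k ∈ K, cs.length y⁻¹ < cs.length (y⁻¹ * cs.simple k) := by
    intro k hk
    have h1 : (y⁻¹ * cs.simple k)⁻¹ = cs.simple k * y := by
      rw [mul_inv_rev, inv_inv, cs.inv_simple]
    have h2 : cs.length (y⁻¹ * cs.simple k) = cs.length (cs.simple k * y) := by
      rw [← cs.length_inv, h1]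
    rw [h2, cs.length_inv]
    exact hdesc k hk
  have h3 : cs.length (b * y) = cs.length (y⁻¹ * b⁻¹) := by
    rw [show y⁻¹ * b⁻¹ = (b * y)⁻¹ from by rw [mul_inv_rev], cs.length_inv]
  rw [h3, aux_mll cs hdesc' (inv_mem hb), cs.length_inv, cs.length_inv]
  omega

lemma aux_equiv_wordProd (e : W ≃* W) (f : B → B)
    (he : ∀ i, e (cs.simple i) = cs.simple (f i)) (σ : List B) :
    e (cs.wordProd σ) = cs.wordProd (σ.map f) := by
  induction σ with
  | nil => simp
  | cons i σ ih =>
      rw [cs.wordProd_cons, map_mul, he i, ih, List.map_cons, cs.wordProd_cons]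

lemma aux_equiv_length_le (e : W ≃* W) (f : B → B)
    (he : ∀ i, e (cs.simple i) = cs.simple (f i)) (x : W) :
    cs.length (e x) ≤ cs.length x := by
  obtain ⟨γ, hγred, hγ⟩ := cs.exists_reduced_word' x
  rw [hγ, aux_equiv_wordProd cs e f he]
  calc cs.length (cs.wordProd (γ.map f)) ≤ (γ.map f).length := cs.length_wordProd_le _
    _ = γ.length := List.length_map _
    _ = cs.length (cs.wordProd γ) := hγred.symm

end AuxBruhat

/-- If `w₁ δ(u₁) y⁻¹ ≤ w y⁻¹` with `w₁ ∈ W^{δ(J)}`, `u₁ ∈ W_J`, then for every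
`u₂ ∈ W_J` with `u₂ ≤ u₁` one has `w₁ δ(u₂) y⁻¹ ≤ w y⁻¹`. -/
theorem bruhat_le_of_le_parabolic (δ : W ≃* W) (δI : B ≃ B)
    (hδ : ∀ i, δ (cs.simple i) = cs.simple (δI i))
    (J J' : Set B) (y : W)
    (hy : y ∈ cs.minLeft J' ∩ cs.minRight (δI '' J))
    (hconj : ∀ j ∈ J, ∃ j' ∈ J', y * cs.simple (δI j) * y⁻¹ = cs.simple j' ∧
      cs.length (y * cs.simple (δI j)) = cs.length y + 1)
    (w w₁ : W) (hw : w ∈ cs.minRight (δI '' J)) (hw₁ : w₁ ∈ cs.minRight (δI '' J))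
    (u₁ : W) (hu₁ : u₁ ∈ cs.parabolic J)
    (h : cs.bruhatLE (w₁ * δ u₁ * y⁻¹) (w * y⁻¹))
    (u₂ : W) (hu₂ : u₂ ∈ cs.parabolic J) (hle : cs.bruhatLE u₂ u₁) :
    cs.bruhatLE (w₁ * δ u₂ * y⁻¹) (w * y⁻¹) := by
  classical
  obtain ⟨hyL, hyR⟩ := hy
  have hyLa : ∀ k ∈ J', cs.length y < cs.length (cs.simple k * y) := hyL
  have hyRa : ∀ k ∈ δI '' J, cs.length y < cs.length (y * cs.simple k) := hyR
  have hw₁a : ∀ k ∈ δI '' J, cs.length w₁ < cs.length (w₁ * cs.simple k) := hw₁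
  have h01 : ∀ z : ZMod 2, z = 0 ∨ z = 1 := by decide
  have hcex : ∀ j ∈ J, ∃ j', j' ∈ J' ∧ y * cs.simple (δI j) * y⁻¹ = cs.simple j' := by
    intro j hj
    obtain ⟨j', hj', hcj, _⟩ := hconj j hj
    exact ⟨j', hj', hcj⟩
  choose! c hc1 hc2 using hcex
  obtain ⟨σr, hσred, hσJ, hσprod⟩ := aux_kword cs hu₁
  obtain ⟨σ₂, hσ₂sub, hσ₂prod⟩ := aux_le_all cs hle σr hσred hσprod
  have hσ₂J : ∀ x ∈ σ₂, x ∈ J := fun x hx => hσJ x (hσ₂sub.subset hx)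
  have conjword : ∀ σ : List B, (∀ x ∈ σ, x ∈ J) →
      cs.wordProd (σ.map c) = y * δ (cs.wordProd σ) * y⁻¹ := by
    intro σ
    induction σ with
    | nil => intro _; simp
    | cons j σ ih =>
        intro hσ
        rw [List.map_cons, cs.wordProd_cons, cs.wordProd_cons, map_mul,
          ih (fun x hx => hσ x (List.mem_cons_of_mem j hx)), hδ j,
          ← hc2 j (hσ j List.mem_cons_self)]
        group
  set g := w₁ * y⁻¹ with hgdef
  set b1 := cs.wordProd (σr.map c) with hb1def
  have hb1 : b1 = y * δ u₁ * y⁻¹ := by rw [hb1def, conjword σr hσJ, hσprod]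
  have hδlen : ∀ x : W, cs.length (δ x) = cs.length x := by
    intro x
    have h1 := aux_equiv_length_le cs δ δI hδ x
    have hsymm : ∀ i, δ.symm (cs.simple i) = cs.simple (δI.symm i) := by
      intro i
      have h2 := hδ (δI.symm i)
      rw [Equiv.apply_symm_apply] at h2
      rw [← h2, MulEquiv.symm_apply_apply]
    have h2 := aux_equiv_length_le cs δ.symm δI.symm hsymm (δ x)
    rw [MulEquiv.symm_apply_apply] at h2
    omega
  have hδu₁mem : δ u₁ ∈ cs.parabolic (δI '' J) := by
    have e : δ (cs.wordProd σr) = cs.wordProd (σr.map δI) := aux_equiv_wordProd cs δ δI hδ σr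
    rw [← hσprod, e]
    apply aux_wordmem
    intro x hx
    obtain ⟨x₀, hx₀, rfl⟩ := List.mem_map.mp hx
    exact ⟨x₀, hσJ x₀ hx₀, rfl⟩
  have hyadd : cs.length (y * δ u₁) = cs.length y + cs.length (δ u₁) :=
    aux_mll cs hyRa hδu₁mem
  have hb1mem' : b1 ∈ cs.parabolic J' := by
    rw [hb1def]
    apply aux_wordmem
    intro x hx
    obtain ⟨x₀, hx₀, rfl⟩ := List.mem_map.mp hx
    exact hc1 x₀ (hσJ x₀ hx₀)
  have hleft : cs.length (b1 * y) = cs.length b1 + cs.length y := aux_mll_left cs hyLa hb1mem'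
  have hb1y : b1 * y = y * δ u₁ := by rw [hb1]; group
  have hlb1 : cs.length b1 = cs.length u₁ := by
    rw [hb1y, hyadd, hδlen u₁] at hleft
    omega
  have hdescg : ∀ k ∈ c '' J, cs.length g < cs.length (g * cs.simple k) := by
    rintro k ⟨j, hj, rfl⟩
    have hrefl : cs.IsReflection (cs.simple (c j)) := cs.isReflection_simple _
    have hne := cs.length_mul_simple_ne g (c j)
    rcases Nat.lt_or_ge (cs.length (g * cs.simple (c j))) (cs.length g) with hltc | hge
    · exfalso
      have hν : auxNu cs g (cs.simple (c j)) = 1 :=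
        (auxNu_isRightInversion_iff cs hrefl g).mp hltc
      have hcoc := auxNu_mul cs w₁ y⁻¹ (cs.simple (c j))
      have he1 : y⁻¹ * cs.simple (c j) * (y⁻¹)⁻¹ = cs.simple (δI j) := by
        rw [inv_inv, ← hc2 j hj]
        group
      have hν1 : auxNu cs y⁻¹ (cs.simple (c j)) = 0 := by
        have hnot : ¬ cs.length (y⁻¹ * cs.simple (c j)) < cs.length y⁻¹ := by
          have e1 : cs.length (y⁻¹ * cs.simple (c j)) = cs.length (cs.simple (c j) * y) := by
            rw [show cs.simple (c j) * y = (y⁻¹ * cs.simple (c j))⁻¹ from by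
              rw [mul_inv_rev, inv_inv, cs.inv_simple], cs.length_inv]
          rw [e1, cs.length_inv]
          have := hyLa (c j) (hc1 j hj)
          omega
        rcases h01 (auxNu cs y⁻¹ (cs.simple (c j))) with h0 | h1
        · exact h0
        · exact absurd ((auxNu_isRightInversion_iff cs hrefl y⁻¹).mpr h1) hnot
      have hν2 : auxNu cs w₁ (cs.simple (δI j)) = 0 := by
        have hnot : ¬ cs.length (w₁ * cs.simple (δI j)) < cs.length w₁ := by
          have := hw₁a (δI j) ⟨j, hj, rfl⟩
          omega
        rcases h01 (auxNu cs w₁ (cs.simple (δI j))) with h0 | h1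
        · exact h0
        · exact absurd
            ((auxNu_isRightInversion_iff cs (cs.isReflection_simple (δI j)) w₁).mpr h1) hnot
      rw [he1, hν1, hν2, add_zero, ← hgdef] at hcoc
      rw [hν] at hcoc
      exact absurd hcoc (by decide)
    · omega
  have hb1memc : b1 ∈ cs.parabolic (c '' J) := by
    rw [hb1def]
    apply aux_wordmem
    intro x hx
    obtain ⟨x₀, hx₀, rfl⟩ := List.mem_map.mp hx
    exact ⟨x₀, hσJ x₀ hx₀, rfl⟩
  have hadd : cs.length (g * b1) = cs.length g + cs.length b1 := aux_mll cs hdescg hb1memc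
  obtain ⟨A, hAred, hAg⟩ := cs.exists_reduced_word' g
  have hlu₁ : cs.length u₁ = σr.length := by rw [← hσprod]; exact hσred
  have hmcred : cs.IsReduced (σr.map c) := by
    show cs.length (cs.wordProd (List.map c σr)) = (List.map c σr).length
    rw [← hb1def, hlb1, List.length_map]
    exact hlu₁
  have hEe : cs.wordProd (A ++ σr.map c) = g * b1 := by
    rw [cs.wordProd_append, ← hAg, ← hb1def]
  have hEprod : cs.wordProd (A ++ σr.map c) = w₁ * δ u₁ * y⁻¹ := by
    rw [hEe, hb1, hgdef]
    group
  have hEred : cs.IsReduced (A ++ σr.map c) := by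
    show cs.length (cs.wordProd (A ++ σr.map c)) = (A ++ σr.map c).length
    rw [hEe, hadd, List.length_append]
    have h1 : A.length = cs.length g := by
      rw [hAg]
      exact hAred.symm
    have h2 : (σr.map c).length = cs.length b1 := hmcred.symm
    omega
  have hE'prod : cs.wordProd (A ++ σ₂.map c) = w₁ * δ u₂ * y⁻¹ := by
    rw [cs.wordProd_append, ← hAg, conjword σ₂ hσ₂J, hσ₂prod, hgdef]
    group
  have hltv : cs.bruhatLE (w₁ * δ u₂ * y⁻¹) (w₁ * δ u₁ * y⁻¹) :=
    ⟨A ++ σr.map c, hEred, hEprod, A ++ σ₂.map c,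
      List.Sublist.append (List.Sublist.refl A) (hσ₂sub.map c), hE'prod⟩
  obtain ⟨ω, hωred, hωprod, ωs, hωssub, hωsprod⟩ := h
  obtain ⟨ω₁, hsub₁, hred₁, hprod₁⟩ := aux_deletion cs ωs
  obtain ⟨τ, hτsub, hτprod⟩ := aux_le_all cs hltv ω₁ hred₁ (by rw [hprod₁, hωsprod])
  exact ⟨ω, hωred, hωprod, τ, hτsub.trans (hsub₁.trans hωssub), hτprod⟩
end
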